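/- arXiv:1105.1791 — 5 statements merged into one kernel-verified Lean document; each statement's English description precedes it below -/
import Mathlib

section
/- Let V and W be oriented two-dimensional subspaces of ℝ⁴ with positively oriented orthonormal bases (v₁,v₂) and (w₁,w₂). Define cos θ = ⟨v₁∧v₂, w₁∧w₂⟩ in Λ²ℝ⁴. Then |cos θ| = cos θ₁ · cos θ₂, where θ₁, θ₂ are the principal angles between V and W. -/
/-! Let `P` be the orthogonal projection onto `W`, `M = (⟪vᵢ, wⱼ⟫)` (so that
`det M = ⟪v₁ ∧ v₂, w₁ ∧ w₂⟫`), and `(uⱼ)` an orthonormal basis of `V` with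
`‖P x‖² = ∑ⱼ cos² θⱼ ⟪x, uⱼ⟫²` on `V`. The Gram matrix of `(x, y) ↦ ⟪P x, P y⟫` in the basis
`(vᵢ)` is `M Mᵀ`; by polarization it is also `N D Nᵀ`, where `N = (⟪vᵢ, uⱼ⟫)` is orthogonal and
`D = diag (cos² θⱼ)`. Taking determinants, `(det M)² = cos² θ₁ cos² θ₂`. -/

noncomputable section
open Real
open scoped RealInnerProductSpace

abbrev E4 := EuclideanSpace ℝ (Fin 4)

/-- `θ₁ ≤ θ₂` are the principal angles between the planes `V` and `W` of `ℝ⁴`: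
`cos²θ₁`, `cos²θ₂` are the eigenvalues of the quadratic form `v ↦ ‖p_W v‖²` on `V`. -/
def IsPrincipalAngles (V W : Submodule ℝ E4) (θ₁ θ₂ : ℝ) : Prop :=
  0 ≤ θ₁ ∧ θ₁ ≤ θ₂ ∧ θ₂ ≤ π / 2 ∧
  ∃ v₁ v₂ : E4, v₁ ∈ V ∧ v₂ ∈ V ∧ ‖v₁‖ = 1 ∧ ‖v₂‖ = 1 ∧ ⟪v₁, v₂⟫ = 0 ∧
    ∀ v ∈ V, ‖(W.orthogonalProjectionOnto v : E4)‖ ^ 2 =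
      Real.cos θ₁ ^ 2 * ⟪v, v₁⟫ ^ 2 + Real.cos θ₂ ^ 2 * ⟪v, v₂⟫ ^ 2

open Submodule Set Matrix

section

variable {E : Type*} [NormedAddCommGroup E] [InnerProductSpace ℝ E] {ι : Type*} [Fintype ι]

instance finiteDimensional_span_range {κ : Type*} [Finite κ] (w : κ → E) :
    FiniteDimensional ℝ (span ℝ (range w)) :=
  .span_of_finite ℝ (finite_range w)

theorem orthonormal_pair {x y : E} (hx : ‖x‖ = 1) (hy : ‖y‖ = 1) (hxy : ⟪x, y⟫ = 0) :
    Orthonormal ℝ ![x, y] := by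
  refine ⟨Fin.forall_fin_two.2 ⟨hx, hy⟩, fun i j hij => ?_⟩
  fin_cases i <;> fin_cases j <;> simp_all [real_inner_comm]

theorem Orthonormal.starProjection_span_range_apply {w : ι → E} (hw : Orthonormal ℝ w)
    (x : E) : (span ℝ (range w)).starProjection x = ∑ i, ⟪w i, x⟫ • w i := by
  let b := (Module.Basis.span hw.linearIndependent).toOrthonormalBasis (by
    convert! orthonormal_span hw
    simp [Module.Basis.span_apply])
  rw [starProjection_apply, b.orthogonalProjectionOnto_apply_eq_sum]
  simp [b, Module.Basis.span_apply]

theorem Orthonormal.inner_starProjection_span_range {w : ι → E} (hw : Orthonormal ℝ w)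
    (x y : E) :
    ⟪(span ℝ (range w)).starProjection x, (span ℝ (range w)).starProjection y⟫ =
      ∑ i, ⟪w i, x⟫ * ⟪w i, y⟫ := by
  rw [inner_starProjection_left_eq_right,
    starProjection_eq_self_iff.2 (starProjection_apply_mem _ _),
    hw.starProjection_span_range_apply, inner_sum]
  simp only [real_inner_smul_right, real_inner_comm x, mul_comm]

theorem Orthonormal.inner_eq_sum_of_mem_span {v : ι → E} (hv : Orthonormal ℝ v) {x y : E}
    (hx : x ∈ span ℝ (range v)) (hy : y ∈ span ℝ (range v)) :
    ⟪x, y⟫ = ∑ i, ⟪v i, x⟫ * ⟪v i, y⟫ := by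
  rw [← hv.inner_starProjection_span_range, starProjection_eq_self_iff.2 hx,
    starProjection_eq_self_iff.2 hy]

theorem inner_map_map_eq_sum_of_norm_sq_eq {F : Type*} [NormedAddCommGroup F]
    [InnerProductSpace ℝ F] (T : E →ₗ[ℝ] F) {V : Submodule ℝ E} {u : ι → E} {k : ι → ℝ}
    (hT : ∀ x ∈ V, ‖T x‖ ^ 2 = ∑ i, k i * ⟪x, u i⟫ ^ 2) {x y : E} (hx : x ∈ V) (hy : y ∈ V) :
    ⟪T x, T y⟫ = ∑ i, k i * ⟪x, u i⟫ * ⟪y, u i⟫ := by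
  have hxy := hT (x + y) (V.add_mem hx hy)
  rw [map_add, norm_add_sq_real, hT x hx, hT y hy] at hxy
  have hsplit : ∑ i, k i * ⟪x + y, u i⟫ ^ 2 = ∑ i, k i * ⟪x, u i⟫ ^ 2 +
      2 * ∑ i, k i * ⟪x, u i⟫ * ⟪y, u i⟫ + ∑ i, k i * ⟪y, u i⟫ ^ 2 := by
    simp only [inner_add_left, Finset.mul_sum, ← Finset.sum_add_distrib]
    exact Finset.sum_congr rfl fun i _ => by ring
  linarith

def innerMatrix {κ : Type*} (v : ι → E) (w : κ → E) : Matrix ι κ ℝ :=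
  Matrix.of fun i j => ⟪v i, w j⟫

theorem sq_det_innerMatrix_eq_prod [DecidableEq ι] {v w u : ι → E} {k : ι → ℝ}
    (hv : Orthonormal ℝ v) (hw : Orthonormal ℝ w) (hu : Orthonormal ℝ u)
    (huv : ∀ i, u i ∈ span ℝ (range v))
    (hq : ∀ x ∈ span ℝ (range v),
      ‖(span ℝ (range w)).starProjection x‖ ^ 2 = ∑ i, k i * ⟪x, u i⟫ ^ 2) :
    (innerMatrix v w).det ^ 2 = ∏ i, k i := by
  set M := innerMatrix v w
  set N := innerMatrix v u
  have hvV (i : ι) : v i ∈ span ℝ (range v) := subset_span (mem_range_self i)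
  have hgram : M * Mᵀ = N * diagonal k * Nᵀ := by
    ext i j
    calc (M * Mᵀ) i j
        = ⟪(span ℝ (range w)).starProjection (v i),
            (span ℝ (range w)).starProjection (v j)⟫ := by
          simp [hw.inner_starProjection_span_range, M, innerMatrix, mul_apply, real_inner_comm]
      _ = ∑ l, k l * ⟪v i, u l⟫ * ⟪v j, u l⟫ :=
          inner_map_map_eq_sum_of_norm_sq_eq ((span ℝ (range w)).starProjection : E →ₗ[ℝ] E) hq
            (hvV i) (hvV j)
      _ = (N * diagonal k * Nᵀ) i j := by
          simp [N, innerMatrix, mul_apply, diagonal_apply, mul_comm]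
  have horth : Nᵀ * N = 1 := by
    ext i j
    calc (Nᵀ * N) i j = ∑ l, ⟪v l, u i⟫ * ⟪v l, u j⟫ := by simp [N, innerMatrix, mul_apply]
      _ = ⟪u i, u j⟫ := (hv.inner_eq_sum_of_mem_span (huv i) (huv j)).symm
      _ = (1 : Matrix ι ι ℝ) i j := by rw [orthonormal_iff_ite.1 hu, one_apply]
  have hN : N.det ^ 2 = 1 := by
    simpa [det_mul, det_transpose, sq] using congrArg det horth
  calc M.det ^ 2 = (M * Mᵀ).det := by rw [det_mul, det_transpose, sq]
    _ = (N * diagonal k * Nᵀ).det := by rw [hgram]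
    _ = N.det ^ 2 * ∏ i, k i := by rw [det_mul, det_mul, det_diagonal, det_transpose]; ring
    _ = ∏ i, k i := by rw [hN, one_mul]

end

theorem abs_cos_angle_eq_prod_cos_principal_angles_general
    (V W : Submodule ℝ E4)
    (θ₁ θ₂ : ℝ) (h : IsPrincipalAngles V W θ₁ θ₂)
    (v₁ v₂ w₁ w₂ : E4)
    (hv₁ : ‖v₁‖ = 1) (hv₂ : ‖v₂‖ = 1) (hv : ⟪v₁, v₂⟫ = 0)
    (hVspan : V = Submodule.span ℝ {v₁, v₂})
    (hw₁ : ‖w₁‖ = 1) (hw₂ : ‖w₂‖ = 1) (hw : ⟪w₁, w₂⟫ = 0)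
    (hWspan : W = Submodule.span ℝ {w₁, w₂}) :
    |⟪v₁, w₁⟫ * ⟪v₂, w₂⟫ - ⟪v₂, w₁⟫ * ⟪v₁, w₂⟫| = Real.cos θ₁ * Real.cos θ₂ := by
  obtain ⟨hθ₁, hθ₁₂, hθ₂, u₁, u₂, hu₁, hu₂, hu₁n, hu₂n, hu, hq⟩ := h
  rw [← range_cons_cons_empty v₁ v₂ ![]] at hVspan
  rw [← range_cons_cons_empty w₁ w₂ ![]] at hWspan
  subst hVspan hWspan
  have hdet := sq_det_innerMatrix_eq_prod (k := ![cos θ₁ ^ 2, cos θ₂ ^ 2])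
    (orthonormal_pair hv₁ hv₂ hv) (orthonormal_pair hw₁ hw₂ hw) (orthonormal_pair hu₁n hu₂n hu)
    (Fin.forall_fin_two.2 ⟨hu₁, hu₂⟩) (fun x hx => by simpa [Fin.sum_univ_two] using hq x hx)
  simp only [det_fin_two, Fin.prod_univ_two, innerMatrix, of_apply, cons_val_zero, cons_val_one,
    cons_val_fin_one] at hdet
  have hcos : 0 ≤ cos θ₁ * cos θ₂ := by
    have := pi_pos
    exact mul_nonneg (cos_nonneg_of_mem_Icc ⟨by linarith, by linarith⟩)
      (cos_nonneg_of_mem_Icc ⟨by linarith, by linarith⟩)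
  rw [← abs_of_nonneg hcos, ← sq_eq_sq_iff_abs_eq_abs]
  linear_combination hdet

/-- If `(v₁, v₂)` and `(w₁, w₂)` are orthonormal bases of the planes `V` and `W`, and
`cos θ = ⟪v₁ ∧ v₂, w₁ ∧ w₂⟫ = ⟪v₁,w₁⟫⟪v₂,w₂⟫ − ⟪v₂,w₁⟫⟪v₁,w₂⟫`, then
`|cos θ| = cos θ₁ · cos θ₂` where `θ₁, θ₂` are the principal angles between `V` and `W`. -/
theorem abs_cos_angle_eq_prod_cos_principal_angles
    (V W : Submodule ℝ E4) (hV : Module.finrank ℝ V = 2) (hW : Module.finrank ℝ W = 2)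
    (θ₁ θ₂ : ℝ) (h : IsPrincipalAngles V W θ₁ θ₂)
    (v₁ v₂ w₁ w₂ : E4)
    (hv₁ : ‖v₁‖ = 1) (hv₂ : ‖v₂‖ = 1) (hv : ⟪v₁, v₂⟫ = 0)
    (hVspan : V = Submodule.span ℝ {v₁, v₂})
    (hw₁ : ‖w₁‖ = 1) (hw₂ : ‖w₂‖ = 1) (hw : ⟪w₁, w₂⟫ = 0)
    (hWspan : W = Submodule.span ℝ {w₁, w₂}) :
    |⟪v₁, w₁⟫ * ⟪v₂, w₂⟫ - ⟪v₂, w₁⟫ * ⟪v₁, w₂⟫| = Real.cos θ₁ * Real.cos θ₂ :=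
  abs_cos_angle_eq_prod_cos_principal_angles_general V W θ₁ θ₂ h v₁ v₂ w₁ w₂ hv₁ hv₂ hv hVspan hw₁
    hw₂ hw hWspan
end
end

section
/- Let f: ℝ → ℝ be a nonnegative C¹ function defined on all of ℝ satisfying (f²/2)′ = B f³ for a nonzero constant B. Then f ≡ 0. -/
/-!
At a zero of `f` the nonnegative function `f` has a minimum, so `f' = 0` there; elsewhere one
cancels `f`. Hence `f' = B f²` everywhere. Where `f > 0` this says `(1/f)' = -B`, so `1/f` decreases
linearly in the direction of `sign B`, while `f` itself is monotone in that direction and so stays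
positive: `1/f` would have to reach `0` in finite time.
-/

open Set

lemma hasDerivAt_mul_sq_of_deriv_half_sq {f : ℝ → ℝ} {B : ℝ} (hf : Differentiable ℝ f)
    (hpos : ∀ t, 0 ≤ f t) (hode : ∀ t, deriv (fun s => f s ^ 2 / 2) t = B * f t ^ 3) (t : ℝ) :
    HasDerivAt f (B * f t ^ 2) t := by
  suffices hd : deriv f t = B * f t ^ 2 from hd ▸ (hf t).hasDerivAt
  rcases eq_or_ne (f t) 0 with h0 | h0
  · have hmin : IsLocalMin f t := Filter.Eventually.of_forall fun s => h0 ▸ hpos s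
    rw [hmin.deriv_eq_zero, h0]
    ring
  · have hsq : HasDerivAt (fun s => f s ^ 2 / 2) (f t * deriv f t) t :=
      (((hf t).hasDerivAt.pow 2).div_const 2).congr_deriv (by ring)
    refine mul_left_cancel₀ h0 ?_
    rw [← hsq.deriv, hode t]
    ring

lemma inv_add_mul_eq_of_hasDerivAt_mul_sq {f : ℝ → ℝ} {B a b : ℝ} (hab : a ≤ b)
    (hd : ∀ x ∈ Icc a b, HasDerivAt f (B * f x ^ 2) x) (hne : ∀ x ∈ Icc a b, f x ≠ 0) :
    (f b)⁻¹ + B * b = (f a)⁻¹ + B * a := by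
  have hderiv : ∀ x ∈ Icc a b, HasDerivAt (fun t => (f t)⁻¹ + B * t) 0 x := by
    intro x hx
    refine (((hd x hx).inv (hne x hx)).add ((hasDerivAt_id x).const_mul B)).congr_deriv ?_
    field_simp [hne x hx]
    ring
  exact constant_of_has_deriv_right_zero (fun x hx => (hderiv x hx).continuousAt.continuousWithinAt)
    (fun x hx => (hderiv x (Ico_subset_Icc_self hx)).hasDerivWithinAt) b ⟨hab, le_rfl⟩

lemma eq_zero_of_hasDerivAt_mul_sq_of_pos {f : ℝ → ℝ} {B : ℝ} (hB : 0 < B)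
    (hpos : ∀ t, 0 ≤ f t) (hd : ∀ t, HasDerivAt f (B * f t ^ 2) t) (t₀ : ℝ) : f t₀ = 0 := by
  by_contra hne
  have hft₀ : 0 < f t₀ := (hpos t₀).lt_of_ne' hne
  have hmono : Monotone f := monotone_of_hasDerivAt_nonneg hd fun t => by positivity
  -- the time at which `1 / f` would vanish
  set T := t₀ + (f t₀)⁻¹ / B
  have hT : t₀ ≤ T := le_add_of_nonneg_right (by positivity)
  have hfT : 0 < f T := hft₀.trans_le (hmono hT)
  have hinv := inv_add_mul_eq_of_hasDerivAt_mul_sq hT (fun x _ => hd x)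
    (fun x hx => (hft₀.trans_le (hmono hx.1)).ne')
  have hBT : B * T = B * t₀ + (f t₀)⁻¹ := by
    simp only [T]
    field_simp
  have : (f T)⁻¹ = 0 := by linarith
  exact (inv_pos.mpr hfT).ne' this

lemma eq_zero_of_hasDerivAt_mul_sq {f : ℝ → ℝ} {B : ℝ} (hB : B ≠ 0)
    (hpos : ∀ t, 0 ≤ f t) (hd : ∀ t, HasDerivAt f (B * f t ^ 2) t) (t : ℝ) : f t = 0 := by
  rcases hB.lt_or_gt with hneg | hpos'
  · have hrev : ∀ s, HasDerivAt (fun s => f (-s)) (-B * f (-s) ^ 2) s := fun s =>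
      ((hd (-s)).comp s (hasDerivAt_neg s)).congr_deriv (by ring)
    simpa using eq_zero_of_hasDerivAt_mul_sq_of_pos (neg_pos.mpr hneg) (fun s => hpos (-s)) hrev (-t)
  · exact eq_zero_of_hasDerivAt_mul_sq_of_pos hpos' hpos hd t

/-- If `f : ℝ → ℝ` is a nonnegative `C¹` function on all of `ℝ` satisfying the ODE
`(f²/2)′ = B f³` for a nonzero constant `B`, then `f ≡ 0`. -/
theorem ode_global_nonneg_solution_eq_zero
    (f : ℝ → ℝ) (hf : ContDiff ℝ 1 f) (hpos : ∀ t : ℝ, 0 ≤ f t)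
    (B : ℝ) (hB : B ≠ 0)
    (hode : ∀ t : ℝ, deriv (fun s => f s ^ 2 / 2) t = B * f t ^ 3) :
    ∀ t : ℝ, f t = 0 :=
  eq_zero_of_hasDerivAt_mul_sq hB hpos
    (hasDerivAt_mul_sq_of_deriv_half_sq (hf.differentiable one_ne_zero) hpos hode)
end

section
/- Let Σ ⊂ ℝ⁴ be the graph of (f,g): Ω ⊂ ℝ² → ℝ² with constant principal angles with respect to ℝ²×{0}. If the smaller principal angle θ₁ has multiplicity 2 (i.e., θ₁ = θ₂), then Σ is totally geodesic, i.e., f and g are affine functions. -/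
noncomputable section
open Real
open scoped RealInnerProductSpace

def px (f : ℝ × ℝ → ℝ) (p : ℝ × ℝ) : ℝ := fderiv ℝ f p (1, 0)
def py (f : ℝ × ℝ → ℝ) (p : ℝ × ℝ) : ℝ := fderiv ℝ f p (0, 1)

/-- `∂ₓ = (1, 0, f_x, g_x)`. -/
def Dx (f g : ℝ × ℝ → ℝ) (p : ℝ × ℝ) : E4 :=
  EuclideanSpace.single 0 1 + px f p • EuclideanSpace.single 2 1
    + px g p • EuclideanSpace.single 3 1

/-- `∂_y = (0, 1, f_y, g_y)`. -/
def Dy (f g : ℝ × ℝ → ℝ) (p : ℝ × ℝ) : E4 :=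
  EuclideanSpace.single 1 1 + py f p • EuclideanSpace.single 2 1
    + py g p • EuclideanSpace.single 3 1

/-- The plane `Π = ℝ² × {0}` in `ℝ⁴`. -/
def Pl12 : Submodule ℝ E4 :=
  Submodule.span ℝ {EuclideanSpace.single 0 1, EuclideanSpace.single 1 1}

set_option maxHeartbeats 1600000


/-- A differentiable function with zero derivative on an open preconnected set is constant. -/
lemma const_of_fderiv_zero {F : Type*} [NormedAddCommGroup F] [NormedSpace ℝ F]
    {Ω : Set (ℝ × ℝ)} (hΩ : IsOpen Ω) (hconn : IsPreconnected Ω) (φ : ℝ × ℝ → F)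
    (hd : ∀ q ∈ Ω, DifferentiableAt ℝ φ q) (hz : ∀ q ∈ Ω, fderiv ℝ φ q = 0) :
    ∀ p ∈ Ω, ∀ q ∈ Ω, φ p = φ q := by
  have hloc : ∀ x ∈ Ω, ∀ᶠ y in nhds x, φ y = φ x := by
    intro x hx
    obtain ⟨r, hr, hball⟩ := Metric.isOpen_iff.1 hΩ x hx
    have hconst : ∀ y ∈ Metric.ball x r, φ y = φ x := by
      intro y hy
      refine (convex_ball x r).is_const_of_fderivWithin_eq_zero
        (fun z hz' => (hd z (hball hz')).differentiableWithinAt) ?_ hy (Metric.mem_ball_self hr)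
      intro z hz'
      rw [fderivWithin_of_isOpen Metric.isOpen_ball hz']
      exact hz z (hball hz')
    filter_upwards [Metric.isOpen_ball.mem_nhds (Metric.mem_ball_self hr)] with y hy
      using hconst y hy
  intro p hp q hq
  haveI : PreconnectedSpace Ω := Subtype.preconnectedSpace hconn
  have hlc : IsLocallyConstant (fun x : Ω => φ x) := by
    rw [IsLocallyConstant.iff_eventually_eq]
    intro x
    exact (continuousAt_subtype_val).eventually (hloc x x.2)
  exact hlc.apply_eq_of_preconnectedSpace ⟨p, hp⟩ ⟨q, hq⟩

/-- If `f` has constant derivative on an open preconnected set, it is affine there. -/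
lemma affine_of_fderiv_const {Ω : Set (ℝ × ℝ)} (hΩ : IsOpen Ω) (hconn : IsPreconnected Ω)
    (f : ℝ × ℝ → ℝ) (hd : ∀ q ∈ Ω, DifferentiableAt ℝ f q)
    (hconst : ∀ p ∈ Ω, ∀ q ∈ Ω, fderiv ℝ f p = fderiv ℝ f q) :
    ∃ a b c : ℝ, ∀ p ∈ Ω, f p = a * p.1 + b * p.2 + c := by
  rcases Set.eq_empty_or_nonempty Ω with h | ⟨p₀, hp₀⟩
  · exact ⟨0, 0, 0, fun p hp => absurd hp (h ▸ Set.notMem_empty p)⟩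
  set L := fderiv ℝ f p₀ with hL
  set a := L (1, 0)
  set b := L (0, 1)
  set M : (ℝ × ℝ) →L[ℝ] ℝ := a • (ContinuousLinearMap.fst ℝ ℝ ℝ) + b • (ContinuousLinearMap.snd ℝ ℝ ℝ) with hM
  have hLM : L = M := by
    apply ContinuousLinearMap.ext
    intro w
    obtain ⟨x, y⟩ := w
    have : ((x : ℝ), (y : ℝ)) = x • ((1:ℝ), (0:ℝ)) + y • ((0:ℝ), (1:ℝ)) := by
      simp [Prod.ext_iff]
    rw [this, map_add, map_smul, map_smul]
    simp [hM, a, b, mul_comm]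
  set φ : ℝ × ℝ → ℝ := fun q => f q - (a * q.1 + b * q.2) with hφ
  have hdM : ∀ q : ℝ × ℝ, HasFDerivAt (fun q : ℝ × ℝ => a * q.1 + b * q.2) M q := by
    intro q
    have h1 : HasFDerivAt (fun q : ℝ × ℝ => q.1) (ContinuousLinearMap.fst ℝ ℝ ℝ) q := hasFDerivAt_fst
    have h2 : HasFDerivAt (fun q : ℝ × ℝ => q.2) (ContinuousLinearMap.snd ℝ ℝ ℝ) q := hasFDerivAt_snd
    exact (h1.const_mul a).add (h2.const_mul b)
  have hφd : ∀ q ∈ Ω, DifferentiableAt ℝ φ q := fun q hq => (hd q hq).sub (hdM q).differentiableAt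
  have hφz : ∀ q ∈ Ω, fderiv ℝ φ q = 0 := by
    intro q hq
    have : HasFDerivAt φ (fderiv ℝ f q - M) q := ((hd q hq).hasFDerivAt).sub (hdM q)
    rw [this.fderiv]
    rw [hconst q hq p₀ hp₀, ← hL, hLM, sub_self]
  have := const_of_fderiv_zero hΩ hconn φ hφd hφz
  refine ⟨a, b, φ p₀, fun p hp => ?_⟩
  have h := this p hp p₀ hp₀
  simp only [hφ] at h ⊢
  linarith


lemma gram_solve (α β γ δ E F G k : ℝ) (hk : k ≠ 0)
    (h1 : α^2 + β^2 = k) (h2 : γ^2 + δ^2 = k) (h3 : α*γ + β*δ = 0)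
    (h4 : α^2*E + 2*(α*β)*F + β^2*G = 1)
    (h5 : γ^2*E + 2*(γ*δ)*F + δ^2*G = 1)
    (h6 : (α*γ)*E + (α*δ + β*γ)*F + (β*δ)*G = 0) :
    E * k = 1 ∧ G * k = 1 ∧ F = 0 := by
  have hk2 : (k:ℝ)^2 ≠ 0 := pow_ne_zero 2 hk
  have hD : (α*δ - β*γ)^2 = k^2 := by
    linear_combination (γ^2+δ^2) * h1 + k * h2 - (α*γ+β*δ) * h3
  have hγ : k*γ = -β*(α*δ - β*γ) := by linear_combination (-γ) * h1 + α * h3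
  have hδ : k*δ = α*(α*δ - β*γ) := by linear_combination (-δ) * h1 + β * h3
  have hDne : (α*δ - β*γ) ≠ 0 := by
    intro h
    rw [h] at hD
    exact hk2 (by linarith [hD])
  have hγ2 : γ^2 = β^2 := by
    apply mul_left_cancel₀ hk2
    calc k^2 * γ^2 = β^2 * (α*δ - β*γ)^2 := by
          linear_combination (k*γ - β*(α*δ - β*γ)) * hγ
      _ = k^2 * β^2 := by linear_combination β^2 * hD
  have hδ2 : δ^2 = α^2 := by
    apply mul_left_cancel₀ hk2
    calc k^2 * δ^2 = α^2 * (α*δ - β*γ)^2 := by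
          linear_combination (k*δ + α*(α*δ - β*γ)) * hδ
      _ = k^2 * α^2 := by linear_combination α^2 * hD
  have hγδ : γ*δ = -(α*β) := by
    apply mul_left_cancel₀ hk2
    calc k^2 * (γ*δ) = -(α*β) * (α*δ - β*γ)^2 := by
          linear_combination (k*δ) * hγ + (-β*(α*δ-β*γ)) * hδ
      _ = k^2 * -(α*β) := by linear_combination (-(α*β)) * hD
  have h5' : β^2*E - 2*(α*β)*F + α^2*G = 1 := by
    linear_combination h5 - E * hγ2 - 2*F*hγδ - G * hδ2
  have h6' : -(α*β)*E + (α^2 - β^2)*F + (α*β)*G = 0 := by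
    have e : (α*δ-β*γ) * (-(α*β)*E + (α^2-β^2)*F + (α*β)*G) = 0 := by
      linear_combination k*h6 - (α*E + β*F)*hγ - (α*F + β*G)*hδ
    exact (mul_eq_zero.1 e).resolve_left hDne
  have hsum : k * (E + G) = 2 := by linear_combination h4 + h5' - (E+G)*h1
  have r1 : (α^2 - β^2) * (E - G) + 4*(α*β)*F = 0 := by linear_combination h4 - h5'
  have r2 : -(α*β)*(E - G) + (α^2 - β^2)*F = 0 := by linear_combination h6'
  have hPQ : (α^2 - β^2)^2 + (2*(α*β))^2 = k^2 := by linear_combination (α^2+β^2+k)*h1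
  have hEG : E - G = 0 := by
    apply mul_left_cancel₀ hk2
    rw [mul_zero]
    linear_combination (α^2-β^2)*r1 - 2*(2*(α*β))*r2 - (E-G)*hPQ
  have hF : F = 0 := by
    apply mul_left_cancel₀ hk2
    rw [mul_zero]
    linear_combination (α*β)*r1 + (α^2-β^2)*r2 - F*hPQ
  have hE : E = G := by linarith
  refine ⟨by rw [hE] at hsum ⊢; linarith, by rw [hE] at hsum; linarith, hF⟩

def vec4 (a b c d : ℝ) : E4 :=
  a • EuclideanSpace.single 0 1 + b • EuclideanSpace.single 1 1
    + c • EuclideanSpace.single 2 1 + d • EuclideanSpace.single 3 1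

lemma inner_vec4 (a b c d a' b' c' d' : ℝ) :
    ⟪vec4 a b c d, vec4 a' b' c' d'⟫ = a * a' + b * b' + c * c' + d * d' := by
  simp only [vec4, inner_add_left, inner_add_right, real_inner_smul_left, real_inner_smul_right,
    EuclideanSpace.inner_single_left, EuclideanSpace.single_apply, map_one, RCLike.star_def,
    starRingEnd_apply, star_trivial]
  norm_num [Fin.ext_iff, show ((3:Fin 4):ℕ) = 3 from rfl, show ((2:Fin 4):ℕ) = 2 from rfl]
  ring

lemma proj_vec4 (a b c d : ℝ) :
    (Pl12.orthogonalProjectionOnto (vec4 a b c d) : E4) = vec4 a b 0 0 := by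
  rw [← Submodule.starProjection_apply]
  apply Submodule.eq_starProjection_of_mem_of_inner_eq_zero
  · have : vec4 a b 0 0 = a • EuclideanSpace.single 0 1 + b • EuclideanSpace.single 1 1 := by
      simp [vec4]
    rw [this]
    exact Submodule.mem_span_pair.2 ⟨a, b, rfl⟩
  · intro w hw
    obtain ⟨m, n, rfl⟩ := Submodule.mem_span_pair.1 hw
    have h1 : vec4 a b c d - vec4 a b 0 0 = vec4 0 0 c d := by
      simp [vec4]
      abel
    have h2 : m • EuclideanSpace.single 0 1 + n • EuclideanSpace.single 1 1
        = vec4 m n 0 0 := by simp [vec4]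
    rw [h1, h2, real_inner_comm, inner_vec4]
    ring

lemma norm_sq_vec4 (a b c d : ℝ) : ‖vec4 a b c d‖ ^ 2 = a^2 + b^2 + c^2 + d^2 := by
  rw [← real_inner_self_eq_norm_sq, inner_vec4]; ring

lemma Dx_eq (f g : ℝ × ℝ → ℝ) (p : ℝ × ℝ) : Dx f g p = vec4 1 0 (px f p) (px g p) := by
  simp [Dx, vec4]

lemma Dy_eq (f g : ℝ × ℝ → ℝ) (p : ℝ × ℝ) : Dy f g p = vec4 0 1 (py f p) (py g p) := by
  simp [Dy, vec4]

lemma smul_vec4 (r a b c d : ℝ) : r • vec4 a b c d = vec4 (r*a) (r*b) (r*c) (r*d) := by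
  simp [vec4, smul_smul, smul_add]

lemma add_vec4 (a b c d a' b' c' d' : ℝ) :
    vec4 a b c d + vec4 a' b' c' d' = vec4 (a+a') (b+b') (c+c') (d+d') := by
  simp [vec4, add_smul]; abel
lemma metric_eqs (f g : ℝ × ℝ → ℝ) (θ : ℝ) (p : ℝ × ℝ)
    (h : IsPrincipalAngles (Submodule.span ℝ {Dx f g p, Dy f g p}) Pl12 θ θ) :
    Real.cos θ ≠ 0 ∧
    (1 + px f p ^ 2 + px g p ^ 2) * Real.cos θ ^ 2 = 1 ∧
    (1 + py f p ^ 2 + py g p ^ 2) * Real.cos θ ^ 2 = 1 ∧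
    px f p * py f p + px g p * py g p = 0 := by
  obtain ⟨-, -, -, v₁, v₂, hv₁V, hv₂V, hn1, hn2, hperp, hform⟩ := h
  set u := px f p with hu
  set v := px g p with hv
  set s := py f p with hs
  set t := py g p with ht
  obtain ⟨α, β, hv₁⟩ := Submodule.mem_span_pair.1 hv₁V
  obtain ⟨γ, δ, hv₂⟩ := Submodule.mem_span_pair.1 hv₂V
  have hv₁' : v₁ = vec4 α β (α*u + β*s) (α*v + β*t) := by
    rw [← hv₁, Dx_eq, Dy_eq, smul_vec4, smul_vec4, add_vec4]
    simp only [mul_one, mul_zero, add_zero, zero_add]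
    rfl
  have hv₂' : v₂ = vec4 γ δ (γ*u + δ*s) (γ*v + δ*t) := by
    rw [← hv₂, Dx_eq, Dy_eq, smul_vec4, smul_vec4, add_vec4]
    simp only [mul_one, mul_zero, add_zero, zero_add]
    rfl
  have hself1 : ⟪v₁, v₁⟫ = 1 := by
    rw [real_inner_self_eq_norm_sq, hn1]; norm_num
  have hself2 : ⟪v₂, v₂⟫ = 1 := by
    rw [real_inner_self_eq_norm_sq, hn2]; norm_num
  have hperp' : ⟪v₂, v₁⟫ = 0 := by rw [real_inner_comm]; exact hperp
  -- quadratic form at v₁, v₂, v₁ + v₂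
  have e1 := hform v₁ hv₁V
  rw [hself1, hperp, hv₁'] at e1
  rw [proj_vec4, norm_sq_vec4] at e1
  have h1 : α^2 + β^2 = Real.cos θ ^ 2 := by linear_combination e1
  have e2 := hform v₂ hv₂V
  rw [hself2, hperp', hv₂'] at e2
  rw [proj_vec4, norm_sq_vec4] at e2
  have h2 : γ^2 + δ^2 = Real.cos θ ^ 2 := by linear_combination e2
  have e3 := hform (v₁ + v₂) (Submodule.add_mem _ hv₁V hv₂V)
  rw [inner_add_left, inner_add_left, hself1, hself2, hperp, hperp'] at e3
  rw [hv₁', hv₂', add_vec4, proj_vec4, norm_sq_vec4] at e3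
  have h3 : α*γ + β*δ = 0 := by linear_combination (e3 - h1 - h2) / 2
  -- orthonormality in terms of the metric
  have h4 : α^2*(1+u^2+v^2) + 2*(α*β)*(u*s+v*t) + β^2*(1+s^2+t^2) = 1 := by
    have := hself1
    rw [hv₁', inner_vec4] at this
    linear_combination this
  have h5 : γ^2*(1+u^2+v^2) + 2*(γ*δ)*(u*s+v*t) + δ^2*(1+s^2+t^2) = 1 := by
    have := hself2
    rw [hv₂', inner_vec4] at this
    linear_combination this
  have h6 : (α*γ)*(1+u^2+v^2) + (α*δ+β*γ)*(u*s+v*t) + (β*δ)*(1+s^2+t^2) = 0 := by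
    have := hperp
    rw [hv₁', hv₂', inner_vec4] at this
    linear_combination this
  have hcos : Real.cos θ ≠ 0 := by
    intro h0
    rw [h0] at h1
    have hα : α = 0 := by nlinarith [sq_nonneg α, sq_nonneg β]
    have hβ : β = 0 := by nlinarith [sq_nonneg α, sq_nonneg β]
    rw [hα, hβ] at hv₁'
    simp only [zero_mul, add_zero, mul_zero] at hv₁'
    have : v₁ = 0 := by
      rw [hv₁']; simp [vec4]
    rw [this, norm_zero] at hn1
    exact one_ne_zero hn1.symm
  have hk : Real.cos θ ^ 2 ≠ 0 := pow_ne_zero 2 hcos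
  obtain ⟨hE, hG, hF⟩ := gram_solve α β γ δ _ _ _ _ hk h1 h2 h3 h4 h5 h6
  exact ⟨hcos, hE, hG, hF⟩

lemma solve6 (u v s t c X1 X2 Y1 Y2 Z1 Z2 : ℝ) (hc : c ≠ 0)
    (hE : u^2 + v^2 = c) (hG : s^2 + t^2 = c) (hF : u*s + v*t = 0)
    (e1 : u*X1 + v*X2 = 0) (e2 : s*Y1 + t*Y2 = 0)
    (e3 : u*Y1 + s*X1 + v*Y2 + t*X2 = 0) (e4 : u*Y1 + v*Y2 = 0)
    (e5 : s*Z1 + t*Z2 = 0) (e6 : u*Z1 + s*Y1 + v*Z2 + t*Y2 = 0) :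
    X1 = 0 ∧ X2 = 0 ∧ Y1 = 0 ∧ Y2 = 0 ∧ Z1 = 0 ∧ Z2 = 0 := by
  have hD : (u*t - v*s)^2 = c^2 := by
    linear_combination (s^2+t^2) * hE + c * hG - (u*s+v*t) * hF
  have hDne : u*t - v*s ≠ 0 := by
    intro h
    rw [h] at hD
    exact hc (pow_eq_zero_iff two_ne_zero |>.1 (by linarith))
  have hY1 : Y1 = 0 := by
    have : (u*t - v*s) * Y1 = 0 := by linear_combination t*e4 - v*e2
    exact (mul_eq_zero.1 this).resolve_left hDne
  have hY2 : Y2 = 0 := by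
    have : (u*t - v*s) * Y2 = 0 := by linear_combination u*e2 - s*e4
    exact (mul_eq_zero.1 this).resolve_left hDne
  have e3' : s*X1 + t*X2 = 0 := by
    rw [hY1, hY2] at e3; linarith
  have e6' : u*Z1 + v*Z2 = 0 := by
    rw [hY1, hY2] at e6; linarith
  have hX1 : X1 = 0 := by
    have : (u*t - v*s) * X1 = 0 := by linear_combination t*e1 - v*e3'
    exact (mul_eq_zero.1 this).resolve_left hDne
  have hX2 : X2 = 0 := by
    have : (u*t - v*s) * X2 = 0 := by linear_combination u*e3' - s*e1
    exact (mul_eq_zero.1 this).resolve_left hDne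
  have hZ1 : Z1 = 0 := by
    have : (u*t - v*s) * Z1 = 0 := by linear_combination t*e6' - v*e5
    exact (mul_eq_zero.1 this).resolve_left hDne
  have hZ2 : Z2 = 0 := by
    have : (u*t - v*s) * Z2 = 0 := by linear_combination u*e5 - s*e6'
    exact (mul_eq_zero.1 this).resolve_left hDne
  exact ⟨hX1, hX2, hY1, hY2, hZ1, hZ2⟩

lemma clm2_ext_zero (A : (ℝ × ℝ) →L[ℝ] (ℝ × ℝ) →L[ℝ] ℝ)
    (h11 : A (1,0) (1,0) = 0) (h12 : A (1,0) (0,1) = 0)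
    (h21 : A (0,1) (1,0) = 0) (h22 : A (0,1) (0,1) = 0) : A = 0 := by
  apply ContinuousLinearMap.ext
  intro w
  apply ContinuousLinearMap.ext
  intro z
  obtain ⟨w1, w2⟩ := w
  obtain ⟨z1, z2⟩ := z
  have hw : ((w1 : ℝ), (w2 : ℝ)) = w1 • ((1:ℝ), (0:ℝ)) + w2 • ((0:ℝ), (1:ℝ)) := by
    simp [Prod.ext_iff]
  have hz : ((z1 : ℝ), (z2 : ℝ)) = z1 • ((1:ℝ), (0:ℝ)) + z2 • ((0:ℝ), (1:ℝ)) := by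
    simp [Prod.ext_iff]
  rw [hw, hz]
  simp only [map_add, map_smul, ContinuousLinearMap.add_apply, ContinuousLinearMap.smul_apply,
    ContinuousLinearMap.zero_apply, smul_eq_mul, h11, h12, h21, h22]
  try ring

lemma snd_deriv_zero (f g : ℝ × ℝ → ℝ) (Ω : Set (ℝ × ℝ)) (hΩ : IsOpen Ω)
    (hf : ContDiffOn ℝ (⊤ : ℕ∞) f Ω) (hg : ContDiffOn ℝ (⊤ : ℕ∞) g Ω)
    (c : ℝ) (hc : c ≠ 0)
    (hE : ∀ q ∈ Ω, px f q ^ 2 + px g q ^ 2 = c)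
    (hG : ∀ q ∈ Ω, py f q ^ 2 + py g q ^ 2 = c)
    (hF : ∀ q ∈ Ω, px f q * py f q + px g q * py g q = 0)
    (p : ℝ × ℝ) (hp : p ∈ Ω) :
    fderiv ℝ (fderiv ℝ f) p = 0 ∧ fderiv ℝ (fderiv ℝ g) p = 0 := by
  have hmem := hΩ.mem_nhds hp
  have hf' : ContDiffOn ℝ (⊤ : ℕ∞) (fun q => fderiv ℝ f q) Ω := hf.fderiv_of_isOpen hΩ (by simp)
  have hg' : ContDiffOn ℝ (⊤ : ℕ∞) (fun q => fderiv ℝ g q) Ω := hg.fderiv_of_isOpen hΩ (by simp)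
  have hdf : ∀ q ∈ Ω, DifferentiableAt ℝ f q := fun q hq =>
    (hf.differentiableOn (by simp)).differentiableAt (hΩ.mem_nhds hq)
  have hdg : ∀ q ∈ Ω, DifferentiableAt ℝ g q := fun q hq =>
    (hg.differentiableOn (by simp)).differentiableAt (hΩ.mem_nhds hq)
  have hdf' : DifferentiableAt ℝ (fun q => fderiv ℝ f q) p :=
    (hf'.differentiableOn (by simp)).differentiableAt hmem
  have hdg' : DifferentiableAt ℝ (fun q => fderiv ℝ g q) p :=
    (hg'.differentiableOn (by simp)).differentiableAt hmem
  set Af := fderiv ℝ (fderiv ℝ f) p with hAfdef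
  set Ag := fderiv ℝ (fderiv ℝ g) p with hAgdef
  have hAf : HasFDerivAt (fderiv ℝ f) Af p := hdf'.hasFDerivAt
  have hAg : HasFDerivAt (fderiv ℝ g) Ag p := hdg'.hasFDerivAt
  have hsymf : ∀ w z : ℝ × ℝ, Af w z = Af z w := by
    intro w z
    refine second_derivative_symmetric_of_eventually (f := f) ?_ hAf w z
    filter_upwards [hmem] with q hq using (hdf q hq).hasFDerivAt
  have hsymg : ∀ w z : ℝ × ℝ, Ag w z = Ag z w := by
    intro w z
    refine second_derivative_symmetric_of_eventually (f := g) ?_ hAg w z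
    filter_upwards [hmem] with q hq using (hdg q hq).hasFDerivAt
  -- derivatives of the four partials
  have hux : HasFDerivAt (px f) ((ContinuousLinearMap.apply ℝ ℝ ((1:ℝ),(0:ℝ))).comp Af) p :=
    (ContinuousLinearMap.apply ℝ ℝ ((1:ℝ),(0:ℝ))).hasFDerivAt.comp p hAf
  have hvx : HasFDerivAt (px g) ((ContinuousLinearMap.apply ℝ ℝ ((1:ℝ),(0:ℝ))).comp Ag) p :=
    (ContinuousLinearMap.apply ℝ ℝ ((1:ℝ),(0:ℝ))).hasFDerivAt.comp p hAg
  have hsy : HasFDerivAt (py f) ((ContinuousLinearMap.apply ℝ ℝ ((0:ℝ),(1:ℝ))).comp Af) p :=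
    (ContinuousLinearMap.apply ℝ ℝ ((0:ℝ),(1:ℝ))).hasFDerivAt.comp p hAf
  have hty : HasFDerivAt (py g) ((ContinuousLinearMap.apply ℝ ℝ ((0:ℝ),(1:ℝ))).comp Ag) p :=
    (ContinuousLinearMap.apply ℝ ℝ ((0:ℝ),(1:ℝ))).hasFDerivAt.comp p hAg
  set u := px f p
  set v := px g p
  set s := py f p
  set t := py g p
  set Uf := (ContinuousLinearMap.apply ℝ ℝ ((1:ℝ),(0:ℝ))).comp Af with hUf
  set Ug := (ContinuousLinearMap.apply ℝ ℝ ((1:ℝ),(0:ℝ))).comp Ag with hUg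
  set Sf := (ContinuousLinearMap.apply ℝ ℝ ((0:ℝ),(1:ℝ))).comp Af with hSf
  set Sg := (ContinuousLinearMap.apply ℝ ℝ ((0:ℝ),(1:ℝ))).comp Ag with hSg
  -- constraint E
  have hCE : HasFDerivAt (fun q => px f q * px f q + px g q * px g q)
      ((u • Uf + u • Uf) + (v • Ug + v • Ug)) p := (hux.mul hux).add (hvx.mul hvx)
  have hCE0 : ((u • Uf + u • Uf) + (v • Ug + v • Ug)) = 0 := by
    have heq : (fun q => px f q * px f q + px g q * px g q) =ᶠ[nhds p] fun _ => c := by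
      filter_upwards [hmem] with q hq
      have := hE q hq
      nlinarith [this]
    have h0 : HasFDerivAt (fun _ : ℝ × ℝ => c) ((u • Uf + u • Uf) + (v • Ug + v • Ug)) p :=
      heq.hasFDerivAt_iff.1 hCE
    exact h0.unique (hasFDerivAt_const c p)
  have hCG : HasFDerivAt (fun q => py f q * py f q + py g q * py g q)
      ((s • Sf + s • Sf) + (t • Sg + t • Sg)) p := (hsy.mul hsy).add (hty.mul hty)
  have hCG0 : ((s • Sf + s • Sf) + (t • Sg + t • Sg)) = 0 := by
    have heq : (fun q => py f q * py f q + py g q * py g q) =ᶠ[nhds p] fun _ => c := by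
      filter_upwards [hmem] with q hq
      have := hG q hq
      nlinarith [this]
    have h0 : HasFDerivAt (fun _ : ℝ × ℝ => c) ((s • Sf + s • Sf) + (t • Sg + t • Sg)) p :=
      heq.hasFDerivAt_iff.1 hCG
    exact h0.unique (hasFDerivAt_const c p)
  have hCF : HasFDerivAt (fun q => px f q * py f q + px g q * py g q)
      ((u • Sf + s • Uf) + (v • Sg + t • Ug)) p := (hux.mul hsy).add (hvx.mul hty)
  have hCF0 : ((u • Sf + s • Uf) + (v • Sg + t • Ug)) = 0 := by
    have heq : (fun q => px f q * py f q + px g q * py g q) =ᶠ[nhds p] fun _ => (0:ℝ) := by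
      filter_upwards [hmem] with q hq using hF q hq
    have h0 : HasFDerivAt (fun _ : ℝ × ℝ => (0:ℝ)) ((u • Sf + s • Uf) + (v • Sg + t • Ug)) p :=
      heq.hasFDerivAt_iff.1 hCF
    exact h0.unique (hasFDerivAt_const 0 p)
  -- evaluate at basis vectors
  have ev : ∀ (L : (ℝ × ℝ) →L[ℝ] ℝ), L = 0 → ∀ w, L w = 0 := by
    intro L hL w; rw [hL]; simp
  have simpit : True := trivial
  have e1 : u * Af (1,0) (1,0) + v * Ag (1,0) (1,0) = 0 := by
    have h := ev _ hCE0 (1,0)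
    rw [hUf, hUg] at h
    simp only [ContinuousLinearMap.add_apply, ContinuousLinearMap.smul_apply,
      ContinuousLinearMap.comp_apply, ContinuousLinearMap.apply_apply, smul_eq_mul] at h
    linarith
  have e4 : u * Af (1,0) (0,1) + v * Ag (1,0) (0,1) = 0 := by
    have h := ev _ hCE0 (0,1)
    rw [hUf, hUg] at h
    simp only [ContinuousLinearMap.add_apply, ContinuousLinearMap.smul_apply,
      ContinuousLinearMap.comp_apply, ContinuousLinearMap.apply_apply, smul_eq_mul] at h
    rw [hsymf (0,1) (1,0), hsymg (0,1) (1,0)] at h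
    linarith
  have e2 : s * Af (1,0) (0,1) + t * Ag (1,0) (0,1) = 0 := by
    have h := ev _ hCG0 (1,0)
    rw [hSf, hSg] at h
    simp only [ContinuousLinearMap.add_apply, ContinuousLinearMap.smul_apply,
      ContinuousLinearMap.comp_apply, ContinuousLinearMap.apply_apply, smul_eq_mul] at h
    linarith
  have e5 : s * Af (0,1) (0,1) + t * Ag (0,1) (0,1) = 0 := by
    have h := ev _ hCG0 (0,1)
    rw [hSf, hSg] at h
    simp only [ContinuousLinearMap.add_apply, ContinuousLinearMap.smul_apply,
      ContinuousLinearMap.comp_apply, ContinuousLinearMap.apply_apply, smul_eq_mul] at h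
    linarith
  have e3 : u * Af (1,0) (0,1) + s * Af (1,0) (1,0) + v * Ag (1,0) (0,1) + t * Ag (1,0) (1,0) = 0 := by
    have h := ev _ hCF0 (1,0)
    rw [hUf, hUg, hSf, hSg] at h
    simp only [ContinuousLinearMap.add_apply, ContinuousLinearMap.smul_apply,
      ContinuousLinearMap.comp_apply, ContinuousLinearMap.apply_apply, smul_eq_mul] at h
    linarith
  have e6 : u * Af (0,1) (0,1) + s * Af (1,0) (0,1) + v * Ag (0,1) (0,1) + t * Ag (1,0) (0,1) = 0 := by
    have h := ev _ hCF0 (0,1)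
    rw [hUf, hUg, hSf, hSg] at h
    simp only [ContinuousLinearMap.add_apply, ContinuousLinearMap.smul_apply,
      ContinuousLinearMap.comp_apply, ContinuousLinearMap.apply_apply, smul_eq_mul] at h
    rw [hsymf (0,1) (1,0), hsymg (0,1) (1,0)] at h
    linarith
  have hEp : u^2 + v^2 = c := hE p hp
  have hGp : s^2 + t^2 = c := hG p hp
  have hFp : u*s + v*t = 0 := hF p hp
  obtain ⟨hX1, hX2, hY1, hY2, hZ1, hZ2⟩ :=
    solve6 u v s t c (Af (1,0) (1,0)) (Ag (1,0) (1,0)) (Af (1,0) (0,1)) (Ag (1,0) (0,1))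
      (Af (0,1) (0,1)) (Ag (0,1) (0,1)) hc hEp hGp hFp e1 e2 e3 e4 e5 e6
  constructor
  · apply clm2_ext_zero
    · exact hX1
    · exact hY1
    · rw [hsymf (0,1) (1,0)]; exact hY1
    · exact hZ1
  · apply clm2_ext_zero
    · exact hX2
    · exact hY2
    · rw [hsymg (0,1) (1,0)]; exact hY2
    · exact hZ2

lemma clm1_ext_zero (L : (ℝ × ℝ) →L[ℝ] ℝ) (h1 : L (1,0) = 0) (h2 : L (0,1) = 0) : L = 0 := by
  apply ContinuousLinearMap.ext
  intro w
  obtain ⟨w1, w2⟩ := w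
  have hw : ((w1 : ℝ), (w2 : ℝ)) = w1 • ((1:ℝ), (0:ℝ)) + w2 • ((0:ℝ), (1:ℝ)) := by
    simp [Prod.ext_iff]
  rw [hw]
  simp only [map_add, map_smul, smul_eq_mul, h1, h2, ContinuousLinearMap.zero_apply]
  try ring

set_option maxHeartbeats 1000000 in
/-- If the graph of `(f, g)` has constant principal angles with respect to `ℝ²×{0}` and
the smaller principal angle has multiplicity two (`θ₁ = θ₂ = θ`), then the graph is
totally geodesic: `f` and `g` are affine. -/
theorem graph_equal_principal_angles_totally_geodesic
    (f g : ℝ × ℝ → ℝ) (Ω : Set (ℝ × ℝ)) (hΩ : IsOpen Ω) (hconn : IsPreconnected Ω)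
    (hf : ContDiffOn ℝ (⊤ : ℕ∞) f Ω) (hg : ContDiffOn ℝ (⊤ : ℕ∞) g Ω)
    (θ : ℝ)
    (hangles : ∀ p ∈ Ω,
      IsPrincipalAngles (Submodule.span ℝ {Dx f g p, Dy f g p}) Pl12 θ θ) :
    (∃ a b c : ℝ, ∀ p ∈ Ω, f p = a * p.1 + b * p.2 + c) ∧
      (∃ a b c : ℝ, ∀ p ∈ Ω, g p = a * p.1 + b * p.2 + c) := by
  rcases Set.eq_empty_or_nonempty Ω with hΩe | ⟨p₀, hp₀⟩
  · subst hΩe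
    exact ⟨⟨0, 0, 0, fun p hp => absurd hp (Set.notMem_empty p)⟩,
      ⟨0, 0, 0, fun p hp => absurd hp (Set.notMem_empty p)⟩⟩
  have hmet := fun p hp => metric_eqs f g θ p (hangles p hp)
  have hcos : Real.cos θ ≠ 0 := (hmet p₀ hp₀).1
  have hk : Real.cos θ ^ 2 ≠ 0 := pow_ne_zero 2 hcos
  set c : ℝ := 1 / Real.cos θ ^ 2 - 1 with hcdef
  have hE : ∀ q ∈ Ω, px f q ^ 2 + px g q ^ 2 = c := by
    intro q hq
    have h := (hmet q hq).2.1
    rw [hcdef]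
    field_simp
    linarith
  have hG : ∀ q ∈ Ω, py f q ^ 2 + py g q ^ 2 = c := by
    intro q hq
    have h := (hmet q hq).2.2.1
    rw [hcdef]
    field_simp
    linarith
  have hF : ∀ q ∈ Ω, px f q * py f q + px g q * py g q = 0 :=
    fun q hq => (hmet q hq).2.2.2
  have hdf : ∀ q ∈ Ω, DifferentiableAt ℝ f q := fun q hq =>
    (hf.differentiableOn (by simp)).differentiableAt (hΩ.mem_nhds hq)
  have hdg : ∀ q ∈ Ω, DifferentiableAt ℝ g q := fun q hq =>
    (hg.differentiableOn (by simp)).differentiableAt (hΩ.mem_nhds hq)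
  have hdf' : ∀ q ∈ Ω, DifferentiableAt ℝ (fun q => fderiv ℝ f q) q := fun q hq =>
    ((hf.fderiv_of_isOpen (m := (⊤ : ℕ∞)) hΩ (by simp)).differentiableOn (by simp)).differentiableAt (hΩ.mem_nhds hq)
  have hdg' : ∀ q ∈ Ω, DifferentiableAt ℝ (fun q => fderiv ℝ g q) q := fun q hq =>
    ((hg.fderiv_of_isOpen (m := (⊤ : ℕ∞)) hΩ (by simp)).differentiableOn (by simp)).differentiableAt (hΩ.mem_nhds hq)
  have key : ∀ p ∈ Ω, ∀ q ∈ Ω, (fderiv ℝ f p = fderiv ℝ f q ∧ fderiv ℝ g p = fderiv ℝ g q) := by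
    by_cases hc : c = 0
    · intro p hp q hq
      have hzero : ∀ r ∈ Ω, fderiv ℝ f r = 0 ∧ fderiv ℝ g r = 0 := by
        intro r hr
        have h1 := hE r hr
        have h2 := hG r hr
        rw [hc] at h1 h2
        have hu : px f r = 0 := by nlinarith [sq_nonneg (px f r), sq_nonneg (px g r)]
        have hv : px g r = 0 := by nlinarith [sq_nonneg (px f r), sq_nonneg (px g r)]
        have hs : py f r = 0 := by nlinarith [sq_nonneg (py f r), sq_nonneg (py g r)]
        have ht : py g r = 0 := by nlinarith [sq_nonneg (py f r), sq_nonneg (py g r)]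
        exact ⟨clm1_ext_zero _ hu hs, clm1_ext_zero _ hv ht⟩
      rw [(hzero p hp).1, (hzero q hq).1, (hzero p hp).2, (hzero q hq).2]
      exact ⟨rfl, rfl⟩
    · have hsnd := fun p hp => snd_deriv_zero f g Ω hΩ hf hg c hc hE hG hF p hp
      intro p hp q hq
      constructor
      · exact const_of_fderiv_zero hΩ hconn (fun q => fderiv ℝ f q) hdf'
          (fun r hr => (hsnd r hr).1) p hp q hq
      · exact const_of_fderiv_zero hΩ hconn (fun q => fderiv ℝ g q) hdg'
          (fun r hr => (hsnd r hr).2) p hp q hq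
  constructor
  · exact affine_of_fderiv_const hΩ hconn f hdf (fun p hp q hq => (key p hp q hq).1)
  · exact affine_of_fderiv_const hΩ hconn g hdg (fun p hp q hq => (key p hp q hq).2)
end
end

section
/- Let θ₁ = 0 and 0 < θ₂ < π/2. In the structure equations of a constant-angle surface with these angles, the relations cos(θ₂)df = dt, −df = −cos(θ₂)dt − sin(θ₂)⟨·,T₁⟩m₂, sin(θ₂)df = ⟨·,T₁⟩m₂, and 0 = cos(θ₂)⟨·,T₂⟩m₁ − sin(θ₂)dn are equivalent to dλ₁ = tan(θ₂)dn, dλ₂ = tan(θ₂)dt, and df = dt/cos(θ₂), where dλ₁ = m₁⟨·,T₂⟩ and dλ₂ = m₂⟨·,T₁⟩. In particular dt(T₂) = 0, i.e., the vector field T₂ is geodesic. -/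
noncomputable section
open Real
open scoped RealInnerProductSpace

/-- Structure equations of a constant-angle surface with `θ₁ = 0`, `0 < θ₂ < π/2`, as an
equivalence of systems of 1-form identities on the tangent plane `T` with orthonormal
frame `(T₁, T₂)`: the relations `cos θ₂ df = dt`, `−df = −cos θ₂ dt − sin θ₂ ⟨·,T₁⟩ m₂`,
`sin θ₂ df = ⟨·,T₁⟩ m₂` and `0 = cos θ₂ ⟨·,T₂⟩ m₁ − sin θ₂ dn` are equivalent to
`dl₁ = tan θ₂ dn`, `dl₂ = tan θ₂ dt` and `df = dt / cos θ₂`, where `dl₁ = m₁⟨·,T₂⟩` and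
`dl₂ = m₂⟨·,T₁⟩`.  In particular `dt(T₂) = 0`, i.e. `T₂` is a geodesic vector field. -/
theorem structure_equations_theta1_zero
    {T : Type*} [NormedAddCommGroup T] [InnerProductSpace ℝ T]
    (θ₂ : ℝ) (h0 : 0 < θ₂) (h2 : θ₂ < π / 2)
    (T₁ T₂ : T) (hT₁ : ‖T₁‖ = 1) (hT₂ : ‖T₂‖ = 1) (hT : ⟪T₁, T₂⟫ = 0)
    (m₁ m₂ : ℝ) (df dt dn dl₁ dl₂ : T →ₗ[ℝ] ℝ)
    (hdl₁ : ∀ X : T, dl₁ X = m₁ * ⟪X, T₂⟫)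
    (hdl₂ : ∀ X : T, dl₂ X = m₂ * ⟪X, T₁⟫) :
    (((∀ X : T, Real.cos θ₂ * df X = dt X) ∧
      (∀ X : T, -df X = -(Real.cos θ₂ * dt X) - Real.sin θ₂ * (⟪X, T₁⟫ * m₂)) ∧
      (∀ X : T, Real.sin θ₂ * df X = ⟪X, T₁⟫ * m₂) ∧
      (∀ X : T, 0 = Real.cos θ₂ * (⟪X, T₂⟫ * m₁) - Real.sin θ₂ * dn X)) ↔
     ((∀ X : T, dl₁ X = Real.tan θ₂ * dn X) ∧
      (∀ X : T, dl₂ X = Real.tan θ₂ * dt X) ∧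
      (∀ X : T, df X = dt X / Real.cos θ₂))) ∧
    (((∀ X : T, Real.cos θ₂ * df X = dt X) ∧
      (∀ X : T, -df X = -(Real.cos θ₂ * dt X) - Real.sin θ₂ * (⟪X, T₁⟫ * m₂)) ∧
      (∀ X : T, Real.sin θ₂ * df X = ⟪X, T₁⟫ * m₂) ∧
      (∀ X : T, 0 = Real.cos θ₂ * (⟪X, T₂⟫ * m₁) - Real.sin θ₂ * dn X)) →
      dt T₂ = 0) := by
  have hcos : Real.cos θ₂ > 0 := Real.cos_pos_of_mem_Ioo ⟨by linarith [Real.pi_pos], h2⟩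
  have hsin : Real.sin θ₂ > 0 := Real.sin_pos_of_pos_of_lt_pi h0 (by linarith [Real.pi_pos])
  have htan : Real.tan θ₂ = Real.sin θ₂ / Real.cos θ₂ := Real.tan_eq_sin_div_cos θ₂
  constructor
  · constructor
    · rintro ⟨h1, _, h3, h4⟩
      refine ⟨fun X => ?_, fun X => ?_, fun X => ?_⟩
      · have := h4 X
        rw [hdl₁, htan]
        field_simp at this ⊢
        nlinarith [this]
      · rw [hdl₂, htan]
        have e3 := h3 X
        have e1 := h1 X
        field_simp
        nlinarith [e3, e1]
      · have := h1 X
        field_simp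
        linarith
    · rintro ⟨h1, h2', h3⟩
      have hsq : Real.sin θ₂ ^ 2 + Real.cos θ₂ ^ 2 = 1 := Real.sin_sq_add_cos_sq θ₂
      refine ⟨fun X => ?_, fun X => ?_, fun X => ?_, fun X => ?_⟩
      · rw [h3 X]; field_simp
      · have e2 := h2' X
        rw [hdl₂] at e2
        have e3 := h3 X
        rw [htan] at e2
        field_simp at e2
        rw [e3]
        field_simp
        linear_combination Real.sin θ₂ * e2 + dt X * hsq
      · have e2 := h2' X
        rw [hdl₂, htan] at e2
        have e3 := h3 X
        field_simp at e2
        rw [e3]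
        field_simp
        nlinarith [e2]
      · have e1 := h1 X
        rw [hdl₁, htan] at e1
        field_simp at e1
        nlinarith [e1]
  · rintro ⟨h1, _, h3, _⟩
    have e3 := h3 T₂
    rw [real_inner_comm, hT] at e3
    have : df T₂ = 0 := by
      have := e3; nlinarith [this]
    have e1 := h1 T₂
    rw [this] at e1
    linarith
end
end

section
/- The map (m, c) ↦ (θ₁, θ₂) given by θ₁ = arcsec√(1 + (m²/2)(c − √(c²−4))) and θ₂ = arcsec√(1 + (m²/2)(c + √(c²−4))) is a surjection from (0,∞) × (2,∞) onto the open triangle {(θ₁,θ₂) : 0 < θ₁ < θ₂ < π/2}. -/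
noncomputable section
open Real

/-- The map `(m, c) ↦ (θ₁, θ₂)`, `θ₁ = arcsec √(1 + (m²/2)(c − √(c²−4)))`,
`θ₂ = arcsec √(1 + (m²/2)(c + √(c²−4)))` (with `arcsec x = arccos x⁻¹`), is a surjection
from `(0,∞) × (2,∞)` onto the open triangle `{(θ₁,θ₂) : 0 < θ₁ < θ₂ < π/2}`. -/
theorem angle_map_surjective (θ₁ θ₂ : ℝ) (h0 : 0 < θ₁) (h12 : θ₁ < θ₂) (h2 : θ₂ < π / 2) :
    ∃ m c : ℝ, 0 < m ∧ 2 < c ∧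
      Real.arccos (Real.sqrt (1 + m ^ 2 / 2 * (c - Real.sqrt (c ^ 2 - 4))))⁻¹ = θ₁ ∧
      Real.arccos (Real.sqrt (1 + m ^ 2 / 2 * (c + Real.sqrt (c ^ 2 - 4))))⁻¹ = θ₂ := by
  have hpi := Real.pi_pos
  have hc1 : 0 < Real.cos θ₁ := Real.cos_pos_of_mem_Ioo ⟨by linarith, by linarith⟩
  have hc2 : 0 < Real.cos θ₂ := Real.cos_pos_of_mem_Ioo ⟨by linarith, by linarith⟩
  set t₁ := Real.tan θ₁ with ht1def
  set t₂ := Real.tan θ₂ with ht2def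
  have ht₁ : 0 < t₁ := Real.tan_pos_of_pos_of_lt_pi_div_two h0 (lt_trans h12 h2)
  have ht₂ : 0 < t₂ := Real.tan_pos_of_pos_of_lt_pi_div_two (h0.trans h12) h2
  have htlt : t₁ < t₂ :=
    Real.tan_lt_tan_of_lt_of_lt_pi_div_two (by linarith) h2 h12
  rw [show θ₁ = Real.arccos (Real.sqrt (1 + t₁ ^ 2))⁻¹ from
      (by rw [Real.inv_sqrt_one_add_tan_sq hc1, Real.arccos_cos h0.le (by linarith)]),
    show θ₂ = Real.arccos (Real.sqrt (1 + t₂ ^ 2))⁻¹ from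
      (by rw [Real.inv_sqrt_one_add_tan_sq hc2, Real.arccos_cos (by linarith) (by linarith)])]
  clear_value t₁ t₂
  clear hc1 hc2 h0 h12 h2 ht1def ht2def
  have hm2 : Real.sqrt (t₁ * t₂) ^ 2 = t₁ * t₂ := Real.sq_sqrt (by positivity)
  set c : ℝ := (t₁ ^ 2 + t₂ ^ 2) / (t₁ * t₂) with hcdef
  have hsq : Real.sqrt (c ^ 2 - 4) = (t₂ ^ 2 - t₁ ^ 2) / (t₁ * t₂) := by
    have h : c ^ 2 - 4 = ((t₂ ^ 2 - t₁ ^ 2) / (t₁ * t₂)) ^ 2 := by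
      rw [hcdef]; field_simp; ring
    rw [h, Real.sqrt_sq (by apply div_nonneg _ (by positivity); nlinarith)]
  refine ⟨Real.sqrt (t₁ * t₂), c, Real.sqrt_pos.2 (by positivity), ?_, ?_, ?_⟩
  · rw [hcdef, lt_div_iff₀ (by positivity)]
    nlinarith [sq_nonneg (t₂ - t₁)]
  · have h : 1 + Real.sqrt (t₁ * t₂) ^ 2 / 2 * (c - Real.sqrt (c ^ 2 - 4)) = 1 + t₁ ^ 2 := by
      rw [hm2, hsq, hcdef]; field_simp; ring
    rw [h]
  · have h : 1 + Real.sqrt (t₁ * t₂) ^ 2 / 2 * (c + Real.sqrt (c ^ 2 - 4)) = 1 + t₂ ^ 2 := by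
      rw [hm2, hsq, hcdef]; field_simp; ring
    rw [h]
end
end
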